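/- Let f be a convex differentiable function on a convex set containing the density matrices, ρ a positive definite density matrix, and suppose f(ρ') ≤ f(ρ) + ⟨∇f(ρ), ρ'-ρ⟩ + ∥ρ'-ρ∥_ρ² for all density matrices ρ' with ∥ρ'-ρ∥_ρ ≤ 1/2. If G := ∇f(ρ) + α I satisfies tr(ρGρ) = 0 and ∥G∥_{ρ,*} ≤ 1, then (1/4)∥G∥_{ρ,*}² ≤ f(ρ) - min_{ρ' density matrix} f(ρ'). -/

import Mathlib

open Matrix
open scoped ComplexOrder

namespace Matrix.PosSemidef

/-- The positive semidefinite square root of a positive semidefinite matrix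
(the definition removed from Mathlib, restored with its old meaning). -/
noncomputable def sqrt {n 𝕜 : Type*} [Fintype n] [DecidableEq n] [RCLike 𝕜] {A : Matrix n n 𝕜}
    (hA : PosSemidef A) : Matrix n n 𝕜 :=
  hA.1.eigenvectorUnitary.1 * diagonal ((↑) ∘ (√·) ∘ hA.1.eigenvalues) *
  (star hA.1.eigenvectorUnitary : Matrix n n 𝕜)

end Matrix.PosSemidef

/-!
Write `s = ρ^{1/2}` and let `T` be the Hermitian part of `s G s` (the gradient need not be
Hermitian). The step `ρ' = ρ - β s T s` has trace one because `tr(s T s) = Re tr(ρ G ρ) = 0`,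
is positive semidefinite as soon as `β² tr T² ≤ 1` (then `1 - β T ⪰ 0`), has local norm
`‖ρ' - ρ‖_ρ² = β² tr T²` and linear term `-β tr T²`. The smoothness bound therefore gives
`f ρ - min f ≥ (β - β²) tr T²` whenever `β² tr T² ≤ 1/4`; taking `β = 1/2`, or `β = 1/(2 tr T²)`
if `tr T² > 1`, yields `min (tr T²) 1 / 4`, which dominates `‖G‖²_{ρ,*} / 4` since
`‖G‖²_{ρ,*} = Re tr (s G s)² ≤ tr T²` and `‖G‖_{ρ,*} ≤ 1`. The `sInf` is a genuine lower bound for `f` on density matrices (not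
the junk value `0`) because they form a compact set, on which the convex, hence continuous, `f`
is bounded below.
-/

open scoped ComplexStarModule

lemma ConvexOn.bddBelow_image_of_isCompact {E : Type*} [NormedAddCommGroup E] [NormedSpace ℝ E]
    [FiniteDimensional ℝ E] {f : E → ℝ} (hf : ConvexOn ℝ Set.univ f) {K : Set E}
    (hK : IsCompact K) : BddBelow (f '' K) :=
  (hK.image_of_continuousOn ((hf.continuousOn isOpen_univ).mono (Set.subset_univ K))).bddBelow

lemma min_div_four_le_of_forall {t c : ℝ}
    (h : ∀ β : ℝ, β ^ 2 * t ≤ 1 / 4 → (β - β ^ 2) * t ≤ c) : min t 1 / 4 ≤ c := by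
  rcases le_or_gt t 1 with ht | ht
  · have hhalf := h (1 / 2) (by linarith)
    rw [min_eq_left ht]
    linarith
  · have ht0 : 0 < t := by linarith
    have hstep := h (1 / (2 * t)) (by
      rw [div_pow, div_mul_eq_mul_div, div_le_div_iff₀ (by positivity) (by norm_num)]
      nlinarith)
    have hval : (1 / (2 * t) - (1 / (2 * t)) ^ 2) * t = 1 / 2 - 1 / (4 * t) := by
      field_simp
      ring
    have hinv : 1 / (4 * t) ≤ 1 / 4 := by
      gcongr
      linarith
    rw [min_eq_right ht.le]
    linarith

namespace Matrix

variable {n 𝕜 : Type*} [RCLike 𝕜]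

lemma PosSemidef.norm_apply_sq_le {A : Matrix n n 𝕜} (hA : A.PosSemidef) (i j : n) :
    (‖A i j‖ ^ 2 : 𝕜) ≤ A i i * A j j := by
  have h := (hA.submatrix ![i, j]).det_nonneg
  rw [det_fin_two] at h
  simp only [submatrix_apply, Matrix.cons_val_zero, Matrix.cons_val_one] at h
  rw [← hA.1.apply j i, RCLike.star_def, RCLike.mul_conj, sub_nonneg] at h
  exact h

variable [Fintype n]

lemma PosSemidef.norm_apply_le_one {A : Matrix n n 𝕜} (hA : A.PosSemidef) (hA1 : A.trace = 1)
    (i j : n) : ‖A i j‖ ≤ 1 := by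
  have hdiag : ∀ k, A k k ≤ 1 := fun k => hA1 ▸
    Finset.single_le_sum (f := fun l => A l l) (fun l _ => hA.diag_nonneg) (Finset.mem_univ k)
  have h : (‖A i j‖ ^ 2 : 𝕜) ≤ 1 := (hA.norm_apply_sq_le i j).trans <|
    mul_le_one₀ (hdiag i) hA.diag_nonneg (hdiag j)
  exact pow_le_one_iff_of_nonneg (norm_nonneg _) two_ne_zero |>.mp (by exact_mod_cast h)

lemma isClosed_setOf_posSemidef : IsClosed {A : Matrix n n 𝕜 | A.PosSemidef} := by
  simp only [posSemidef_iff_dotProduct_mulVec, Set.ofPred_and, Set.ofPred_forall]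
  refine (isClosed_eq continuous_id.matrix_conjTranspose continuous_id).inter
    (isClosed_iInter fun x => isClosed_le continuous_const ?_)
  exact continuous_const.dotProduct (continuous_id.matrix_mulVec continuous_const)

lemma isCompact_setOf_posSemidef_trace_eq_one :
    IsCompact {A : Matrix n n 𝕜 | A.PosSemidef ∧ A.trace = 1} := by
  have hclosed : IsClosed {A : Matrix n n 𝕜 | A.PosSemidef ∧ A.trace = 1} :=
    isClosed_setOf_posSemidef.inter (isClosed_eq continuous_id.matrix_trace continuous_const)
  refine (isCompact_univ_pi fun _ => isCompact_univ_pi fun _ =>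
    ProperSpace.isCompact_closedBall (0 : 𝕜) 1).of_isClosed_subset hclosed ?_
  rintro A ⟨hA, hA1⟩ i - j -
  simpa using hA.norm_apply_le_one hA1 i j

lemma bddBelow_image_setOf_posSemidef_trace_eq_one {f : Matrix n n 𝕜 → ℝ}
    (hf : ConvexOn ℝ Set.univ f) : BddBelow (f '' {A | A.PosSemidef ∧ A.trace = 1}) :=
  let _ := Matrix.normedAddCommGroup (n := n) (m := n) (α := 𝕜)
  let _ := Matrix.normedSpace (n := n) (m := n) (α := 𝕜) (R := ℝ)
  hf.bddBelow_image_of_isCompact isCompact_setOf_posSemidef_trace_eq_one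

lemma IsHermitian.im_trace_mul {A B : Matrix n n 𝕜} (hA : A.IsHermitian) (hB : B.IsHermitian) :
    RCLike.im (A * B).trace = 0 := by
  refine RCLike.conj_eq_iff_im.1 ?_
  rw [← RCLike.star_def, ← trace_conjTranspose, conjTranspose_mul, hA.eq, hB.eq, trace_mul_comm]

variable [DecidableEq n]

lemma PosSemidef.sqrt_eq_cfc {A : Matrix n n 𝕜} (hA : A.PosSemidef) :
    hA.sqrt = cfc Real.sqrt A := by
  rw [hA.1.cfc_eq]
  rfl

lemma PosSemidef.isHermitian_sqrt {A : Matrix n n 𝕜} (hA : A.PosSemidef) :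
    hA.sqrt.IsHermitian := by
  rw [hA.sqrt_eq_cfc]
  exact cfc_predicate _ _

lemma PosSemidef.sqrt_mul_self {A : Matrix n n 𝕜} (hA : A.PosSemidef) :
    hA.sqrt * hA.sqrt = A := by
  rw [hA.sqrt_eq_cfc, ← cfc_mul Real.sqrt Real.sqrt A]
  conv_rhs => rw [← cfc_id ℝ A hA.1]
  refine cfc_congr fun x hx => Real.mul_self_sqrt ?_
  rw [hA.1.spectrum_real_eq_range_eigenvalues] at hx
  obtain ⟨i, rfl⟩ := hx
  exact hA.eigenvalues_nonneg i

lemma nonsing_inv_mul_conj_mul_nonsing_inv {s : Matrix n n 𝕜} (hs : IsUnit s) (T : Matrix n n 𝕜) :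
    s⁻¹ * (s * T * s) * s⁻¹ = T := by
  have hdet := (isUnit_iff_isUnit_det s).1 hs
  rw [Matrix.mul_assoc s, nonsing_inv_mul_cancel_left _ _ hdet,
    mul_nonsing_inv_cancel_right _ _ hdet]

lemma PosDef.isUnit_sqrt {A : Matrix n n 𝕜} (hA : A.PosDef) : IsUnit hA.posSemidef.sqrt := by
  rw [isUnit_iff_isUnit_det]
  refine isUnit_of_mul_isUnit_left (y := hA.posSemidef.sqrt.det) ?_
  rw [← det_mul, hA.posSemidef.sqrt_mul_self, ← isUnit_iff_isUnit_det]
  exact hA.isUnit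

lemma IsHermitian.re_trace_sq {T : Matrix n n 𝕜} (hT : T.IsHermitian) :
    RCLike.re (T ^ 2).trace = ∑ i, hT.eigenvalues i ^ 2 := by
  conv_lhs => rw [hT.spectral_theorem, ← map_pow, Unitary.conjStarAlgAut_apply, trace_mul_cycle,
    Unitary.coe_star_mul_self, one_mul, diagonal_pow, trace_diagonal]
  simp

lemma IsHermitian.re_trace_sq_nonneg {T : Matrix n n 𝕜} (hT : T.IsHermitian) :
    0 ≤ RCLike.re (T ^ 2).trace :=
  hT.re_trace_sq ▸ Finset.sum_nonneg fun _ _ => sq_nonneg _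

lemma IsHermitian.posSemidef_one_sub {T : Matrix n n 𝕜} (hT : T.IsHermitian)
    (h : RCLike.re (T ^ 2).trace ≤ 1) : (1 - T).PosSemidef := by
  have hev : ∀ i, hT.eigenvalues i ≤ 1 := fun i => by
    have hsq : hT.eigenvalues i ^ 2 ≤ 1 :=
      (Finset.single_le_sum (f := fun j => hT.eigenvalues j ^ 2) (fun j _ => sq_nonneg _)
        (Finset.mem_univ i)).trans (hT.re_trace_sq ▸ h)
    exact (abs_le.1 ((sq_le_one_iff_abs_le_one _).1 hsq)).2
  have hdiag : (diagonal (RCLike.ofReal ∘ fun i => 1 - hT.eigenvalues i : n → 𝕜)).PosSemidef :=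
    posSemidef_diagonal_iff.2 fun i => RCLike.ofReal_nonneg.2 (sub_nonneg.2 (hev i))
  convert hdiag.mul_mul_conjTranspose_same (hT.eigenvectorUnitary : Matrix n n 𝕜) using 1
  conv_lhs => rw [hT.spectral_theorem,
    ← map_one (Unitary.conjStarAlgAut 𝕜 _ hT.eigenvectorUnitary), ← map_sub,
    Unitary.conjStarAlgAut_apply]
  congr 2
  ext i j
  by_cases hij : i = j <;> simp [hij]

lemma IsHermitian.posSemidef_mul_self_sub_smul_conj {s T : Matrix n n 𝕜} (hs : s.IsHermitian)
    (hT : T.IsHermitian) {β : ℝ} (h : β ^ 2 * RCLike.re (T ^ 2).trace ≤ 1) :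
    (s * s - β • (s * T * s)).PosSemidef := by
  have hβT : (1 - β • T).PosSemidef := (hT.smul (IsSelfAdjoint.all β)).posSemidef_one_sub <| by
    simpa [smul_pow, trace_smul, RCLike.smul_re] using h
  have := hβT.mul_mul_conjTranspose_same s
  rwa [hs.eq, mul_sub, sub_mul, mul_one, mul_smul_comm, smul_mul_assoc] at this

lemma re_trace_sq_le_re_trace_sq_realPart (S : Matrix n n ℂ) :
    (S ^ 2).trace.re ≤ ((ℜ S : Matrix n n ℂ) ^ 2).trace.re := by
  have hR : (ℜ S : Matrix n n ℂ).IsHermitian := (ℜ S).2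
  have hJ : (ℑ S : Matrix n n ℂ).IsHermitian := (ℑ S).2
  have hRJ := hR.im_trace_mul hJ
  have hJR := hJ.im_trace_mul hR
  have hJJ := hJ.re_trace_sq_nonneg
  simp only [RCLike.im_to_complex, RCLike.re_to_complex] at hRJ hJR hJJ
  conv_lhs => rw [← realPart_add_I_smul_imaginaryPart S]
  simp [sq, add_mul, mul_add, trace_add, trace_smul, smul_smul, hRJ, hJR] at hJJ ⊢
  linarith

lemma re_trace_mul_realPart (S : Matrix n n ℂ) :
    (S * ℜ S).trace.re = ((ℜ S : Matrix n n ℂ) ^ 2).trace.re := by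
  have hJR := IsHermitian.im_trace_mul (ℑ S).2 (ℜ S).2
  simp only [RCLike.im_to_complex] at hJR
  conv_lhs => rw [← realPart_add_I_smul_imaginaryPart S]
  simp [sq, add_mul, trace_add, trace_smul, hJR]

lemma trace_realPart_mul_eq_zero {S P : Matrix n n ℂ} (hP : P.IsHermitian)
    (h : (S * P).trace = 0) : ((ℜ S : Matrix n n ℂ) * P).trace = 0 := by
  have h' : (star S * P).trace = 0 := by
    rw [star_eq_conjTranspose, ← hP.eq, ← conjTranspose_mul, trace_conjTranspose,
      trace_mul_comm, h, star_zero]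
  rw [realPart_apply_coe, smul_mul_assoc, add_mul, trace_smul, trace_add, h, h', add_zero,
    smul_zero]

lemma re_trace_sq_nonsing_inv_conj_step {s : Matrix n n ℂ} (hs : IsUnit s) (ρ T : Matrix n n ℂ)
    (β : ℝ) :
    ((s⁻¹ * (ρ - β • (s * T * s) - ρ) * s⁻¹) ^ 2).trace.re = β ^ 2 * (T ^ 2).trace.re := by
  rw [sub_sub_cancel_left, Matrix.mul_neg, Matrix.neg_mul, Matrix.mul_smul, Matrix.smul_mul,
    nonsing_inv_mul_conj_mul_nonsing_inv hs, neg_sq, smul_pow, trace_smul, Complex.real_smul,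
    Complex.re_ofReal_mul]

lemma trace_conj_realPart_conj_eq_zero {s G : Matrix n n ℂ} (hs : s.IsHermitian)
    (h : (s * s * G * (s * s)).trace = 0) :
    (s * (ℜ (s * G * s) : Matrix n n ℂ) * s).trace = 0 := by
  have hss : (s * s).IsHermitian := by simpa [hs.eq] using isHermitian_mul_conjTranspose_self s
  rw [trace_mul_cycle, trace_mul_comm]
  refine trace_realPart_mul_eq_zero hss ?_
  rw [← h]
  simp only [Matrix.mul_assoc]
  rw [trace_mul_comm s (s * _)]
  simp only [Matrix.mul_assoc]

lemma re_trace_mul_conj_realPart_conj {s G : Matrix n n ℂ} (c : ℂ)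
    (h : (s * (ℜ (s * (G + c • 1) * s) : Matrix n n ℂ) * s).trace = 0) :
    (G * (s * ℜ (s * (G + c • 1) * s) * s)).trace.re =
      ((ℜ (s * (G + c • 1) * s) : Matrix n n ℂ) ^ 2).trace.re := by
  set T : Matrix n n ℂ := ↑(ℜ (s * (G + c • 1) * s))
  have hcyc : ((G + c • 1) * (s * T * s)).trace = (s * (G + c • 1) * s * T).trace := by
    rw [show (G + c • 1) * (s * T * s) = (G + c • 1) * s * T * s by simp only [Matrix.mul_assoc],
      trace_mul_comm _ s]
    simp only [Matrix.mul_assoc]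
  rw [← re_trace_mul_realPart, ← hcyc, Matrix.add_mul, trace_add, Matrix.smul_mul, Matrix.one_mul,
    trace_smul, h, smul_zero, add_zero]

end Matrix

/-- Self-bounding property: if `f` is convex and satisfies the relative-smoothness bound on
the local-norm half-ball around the positive definite density matrix `ρ`, and
`G = ∇f(ρ) + αI` satisfies `tr(ρGρ) = 0` and `∥G∥_{ρ,*} ≤ 1`, then
`(1/4)∥G∥_{ρ,*}² ≤ f(ρ) - min f` over density matrices. -/
theorem stmt_11 {d : ℕ} (f : Matrix (Fin d) (Fin d) ℂ → ℝ)
    (gradf : Matrix (Fin d) (Fin d) ℂ)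
    (hconv : ConvexOn ℝ Set.univ f)
    (ρ : Matrix (Fin d) (Fin d) ℂ) (hρ : ρ.PosDef) (hρ1 : Matrix.trace ρ = 1)
    (α : ℝ)
    (hsmooth : ∀ ρ' : Matrix (Fin d) (Fin d) ℂ, ρ'.PosSemidef → Matrix.trace ρ' = 1 →
      Real.sqrt ((Matrix.trace (((hρ.posSemidef.sqrt)⁻¹ * (ρ' - ρ) * (hρ.posSemidef.sqrt)⁻¹) ^ 2)).re) ≤ 1 / 2 →
      f ρ' ≤ f ρ + (Matrix.trace (gradf * (ρ' - ρ))).re +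
        (Matrix.trace (((hρ.posSemidef.sqrt)⁻¹ * (ρ' - ρ) * (hρ.posSemidef.sqrt)⁻¹) ^ 2)).re)
    (hc : Matrix.trace (ρ * (gradf + (α : ℂ) • 1) * ρ) = 0)
    (hb : Real.sqrt ((Matrix.trace ((hρ.posSemidef.sqrt * (gradf + (α : ℂ) • 1) * hρ.posSemidef.sqrt) ^ 2)).re) ≤ 1) :
    (1 / 4) * (Matrix.trace ((hρ.posSemidef.sqrt * (gradf + (α : ℂ) • 1) * hρ.posSemidef.sqrt) ^ 2)).re
      ≤ f ρ - sInf (f '' {σ | σ.PosSemidef ∧ Matrix.trace σ = 1}) := by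
  have hs := hρ.posSemidef.isHermitian_sqrt
  have hss := hρ.posSemidef.sqrt_mul_self
  set s := hρ.posSemidef.sqrt
  set T : Matrix (Fin d) (Fin d) ℂ := ↑(ℜ (s * (gradf + (α : ℂ) • 1) * s))
  have hTs : (s * T * s).trace = 0 := trace_conj_realPart_conj_eq_zero hs (by rwa [hss])
  have key : ∀ β : ℝ, β ^ 2 * (T ^ 2).trace.re ≤ 1 / 4 →
      (β - β ^ 2) * (T ^ 2).trace.re ≤ f ρ - sInf (f '' {σ | σ.PosSemidef ∧ σ.trace = 1}) := by
    intro β hβT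
    have hpsd : (ρ - β • (s * T * s)).PosSemidef :=
      hss ▸ hs.posSemidef_mul_self_sub_smul_conj (ℜ _).2
        (by simp only [RCLike.re_to_complex]; linarith)
    have htr : (ρ - β • (s * T * s)).trace = 1 := by rw [trace_sub, trace_smul, hTs, hρ1]; simp
    have hquad := re_trace_sq_nonsing_inv_conj_step hρ.isUnit_sqrt ρ T β
    have hlin : (gradf * (ρ - β • (s * T * s) - ρ)).trace.re = -(β * (T ^ 2).trace.re) := by
      rw [sub_sub_cancel_left, Matrix.mul_neg, trace_neg, Matrix.mul_smul, trace_smul,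
        Complex.neg_re, Complex.real_smul, Complex.re_ofReal_mul,
        re_trace_mul_conj_realPart_conj _ hTs]
    have hdesc := hsmooth _ hpsd htr (by
      rw [hquad, Real.sqrt_le_left (by norm_num)]
      linarith)
    rw [hquad, hlin] at hdesc
    linarith [csInf_le (bddBelow_image_setOf_posSemidef_trace_eq_one hconv) ⟨_, ⟨hpsd, htr⟩, rfl⟩]
  have hmin := le_min (re_trace_sq_le_re_trace_sq_realPart (s * (gradf + (α : ℂ) • 1) * s))
    (Real.sqrt_le_one.1 hb)
  linarith [min_div_four_le_of_forall key]
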